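/- Let C be a k-coalgebra and c ∈ C. Let N_c be the smallest subcoalgebra of C containing c, regarded as a right C-comodule via Δ. Given any vector space U with a dinatural family i_Y^U : Hom_k(Y,Y) → U over finite-dimensional right C-comodules Y, the map φ : C → U defined by φ(c) := i_{N_c}^U(ε ⊗ c) (where (ε ⊗ c)(d) = ε(d)c for d ∈ N_c) is the unique linear map satisfying φ ∘ i_X = i_X^U for all finite-dimensional right C-comodules X, where i_X(β ⊗ x) = β(x_(0))x_(1). -/

import Mathlib

/- STATEMENT 15: let C be a k-coalgebra, and for each c ∈ C let N_c be the
smallest subcoalgebra of C containing c, regarded as a right C-comodule via Δ.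
Given any vector space U with a dinatural family i^U over finite-dimensional
right C-comodules, the map φ : C → U, φ(c) = i_{N_c}^U(ε ⊗ c), is the unique
linear map with φ ∘ i_X = i_X^U for all X, where i_X(β ⊗ x) = β(x₍₀₎)x₍₁₎. -/

open TensorProduct

noncomputable section
variable (k : Type) [Field k]
variable (C : Type) [AddCommGroup C] [Module k C] [Coalgebra k C]

/-- A finite-dimensional right `C`-comodule. -/
structure FdComod where
  carrier : Type
  [ab : AddCommGroup carrier]
  [mod : Module k carrier]
  [fin : FiniteDimensional k carrier]
  ρ : carrier →ₗ[k] carrier ⊗[k] C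
  coassoc : (TensorProduct.assoc k carrier C C).toLinearMap ∘ₗ
      (TensorProduct.map ρ LinearMap.id) ∘ₗ ρ
      = (TensorProduct.map LinearMap.id Coalgebra.comul) ∘ₗ ρ
  counit : (TensorProduct.map LinearMap.id Coalgebra.counit) ∘ₗ ρ
      = (TensorProduct.rid k carrier).symm.toLinearMap

attribute [instance] FdComod.ab FdComod.mod FdComod.fin

/-- A morphism of right `C`-comodules. -/
def IsComodHom (X Y : FdComod k C) (f : X.carrier →ₗ[k] Y.carrier) : Prop :=
  Y.ρ ∘ₗ f = (TensorProduct.map f LinearMap.id) ∘ₗ X.ρ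

/-- Dinaturality of a family of maps `Hom_k(X,X) → U` indexed by
finite-dimensional right `C`-comodules: `i_X(f ∘ S) = i_Y(S ∘ f)` for any
comodule morphism `f : Y → X` and linear map `S : X → Y`. -/
def DinatComod (U : Type) [AddCommGroup U] [Module k U]
    (i : ∀ X : FdComod k C, (X.carrier →ₗ[k] X.carrier) →ₗ[k] U) : Prop :=
  ∀ (X Y : FdComod k C) (f : Y.carrier →ₗ[k] X.carrier), IsComodHom k C Y X f →
    ∀ S : X.carrier →ₗ[k] Y.carrier, i X (f ∘ₗ S) = i Y (S ∘ₗ f)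

/-- The canonical maps `i_X : Hom_k(X,X) → C`; on a rank-one map `β ⊗ x`
(i.e. `y ↦ β(y)x`) it is given by `β(x₍₀₎) x₍₁₎`. -/
def canI (X : FdComod k C) : (X.carrier →ₗ[k] X.carrier) →ₗ[k] C :=
  let b := Module.Free.chooseBasis k X.carrier
  ∑ j, ((TensorProduct.lid k C).toLinearMap ∘ₗ
          TensorProduct.map (b.coord j) LinearMap.id ∘ₗ X.ρ) ∘ₗ
        (LinearMap.applyₗ (b j) : (X.carrier →ₗ[k] X.carrier) →ₗ[k] X.carrier)

/-- `D` is a subcoalgebra of `C`: `Δ(D) ⊆ D ⊗ D`. -/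
def IsSubcoalgebra (D : Submodule k C) : Prop :=
  ∀ c ∈ D, (Coalgebra.comul (R := k) c) ∈
    LinearMap.range (TensorProduct.map D.subtype D.subtype)


/-!
For a comodule map `g : X → C` one has `i_X((ε ∘ g) ⊗ x) = g x` (counit axiom), so applying
`φ ∘ i_{N_c} = i_{N_c}^U` to `ε ⊗ c̄` forces `φ(c) = i_{N_c}^U(ε ⊗ c̄)`: uniqueness.

For existence, let `D` be any finite-dimensional subcoalgebra containing `d`, a comodule via `Δ`.
By minimality `N_d ⊆ D`, and dinaturality along the comodule map `N_d → D` gives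
`φ(d) = i_D^U(ε ⊗ d)`, which is linear in `d ∈ D`. Any two elements lie in a common such `D`
(a sum of coefficient coalgebras), so `φ` is linear. Finally, `i_X(S) = ∑ⱼ gⱼ(S bⱼ)` for the
matrix coefficients `gⱼ : X → C`, which are comodule maps, and the same dinaturality argument
applied to `gⱼ` gives `φ(gⱼ x) = i_X^U(bⱼ^* ⊗ x)`; summing over `j` yields `φ ∘ i_X = i_X^U`.
-/

open TensorProduct Coalgebra LinearMap Module

section TensorBasis

variable {k} {M W ι : Type} [AddCommGroup M] [Module k M] [AddCommGroup W] [Module k W]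
  [Fintype ι]

theorem TensorProduct.sum_basis_tmul_lid_rTensor_coord (b : Basis ι k M) (t : M ⊗[k] W) :
    ∑ j, b j ⊗ₜ[k] TensorProduct.lid k W ((b.coord j).rTensor W t) = t := by
  classical
  conv_rhs => rw [← (equivFinsuppOfBasisLeft b).symm_apply_apply t]
  rw [equivFinsuppOfBasisLeft_symm_apply, Finsupp.sum_fintype _ _ (by simp)]
  simp only [equivFinsuppOfBasisLeft_apply]

theorem TensorProduct.lid_rTensor_coord_sum_basis_tmul (b : Basis ι k M) (w : ι → W) (j : ι) :
    TensorProduct.lid k W ((b.coord j).rTensor W (∑ i, b i ⊗ₜ[k] w i)) = w j := by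
  classical
  simp [Finsupp.single_apply]

theorem Module.Basis.sum_coord_smulRight (b : Basis ι k M) (S : M →ₗ[k] M) :
    ∑ j, (b.coord j).smulRight (S (b j)) = S :=
  b.ext fun i => by classical simp [Finsupp.single_apply]

theorem LinearMap.comp_smulRight {N : Type} [AddCommGroup N] [Module k N] (f : M →ₗ[k] N)
    (β : W →ₗ[k] k) (x : M) : f ∘ₗ β.smulRight x = β.smulRight (f x) := by
  ext; simp

theorem LinearMap.smulRight_comp {W' : Type} [AddCommGroup W'] [Module k W'] (β : W →ₗ[k] k)
    (x : M) (h : W' →ₗ[k] W) : β.smulRight x ∘ₗ h = (β ∘ₗ h).smulRight x :=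
  rfl

theorem Submodule.rTensor_subtype_injective (D : Submodule k M) (W : Type) [AddCommGroup W]
    [Module k W] : Function.Injective (D.subtype.rTensor W) :=
  Module.Flat.rTensor_preserves_injective_linearMap _ D.injective_subtype

end TensorBasis

def IsRightCoideal (D : Submodule k C) : Prop :=
  ∀ c ∈ D, comul (R := k) c ∈ range (D.subtype.rTensor C)

section

variable {k C}

namespace FdComod

/-- `g : X → C` is a morphism of right comodules, `C` being a comodule through `Δ`. -/
def IsRegularComodHom (X : FdComod k C) (g : X.carrier →ₗ[k] C) : Prop :=
  g.rTensor C ∘ₗ X.ρ = comul ∘ₗ g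

abbrev basis (X : FdComod k C) : Basis (Free.ChooseBasisIndex k X.carrier) k X.carrier :=
  Free.chooseBasis k X.carrier

def coeffMap (X : FdComod k C) (j : Free.ChooseBasisIndex k X.carrier) : X.carrier →ₗ[k] C :=
  (TensorProduct.lid k C).toLinearMap ∘ₗ (X.basis.coord j).rTensor C ∘ₗ X.ρ

theorem ρ_eq_sum (X : FdComod k C) (x : X.carrier) :
    X.ρ x = ∑ j, X.basis j ⊗ₜ[k] X.coeffMap j x :=
  (sum_basis_tmul_lid_rTensor_coord X.basis (X.ρ x)).symm

theorem comul_coeffMap (X : FdComod k C) (j) (x : X.carrier) :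
    comul (R := k) (X.coeffMap j x) = ∑ i, X.coeffMap j (X.basis i) ⊗ₜ[k] X.coeffMap i x := by
  have h := congr($(X.coassoc) x)
  simp only [comp_apply, LinearEquiv.coe_coe, ρ_eq_sum X x, map_sum, map_tmul, id_coe, id_eq,
    ρ_eq_sum X (X.basis _), sum_tmul, assoc_tmul] at h
  rw [Finset.sum_comm] at h
  simp_rw [← tmul_sum] at h
  simpa only [lid_rTensor_coord_sum_basis_tmul] using
    congr(TensorProduct.lid k (C ⊗[k] C) ((X.basis.coord j).rTensor _ $h)).symm

theorem counit_comp_coeffMap (X : FdComod k C) (j) :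
    Coalgebra.counit ∘ₗ X.coeffMap j = X.basis.coord j := by
  have hnat : Coalgebra.counit ∘ₗ (TensorProduct.lid k C).toLinearMap ∘ₗ
        (X.basis.coord j).rTensor C =
      (TensorProduct.lid k k).toLinearMap ∘ₗ (X.basis.coord j).rTensor k ∘ₗ
        Coalgebra.counit.lTensor X.carrier := by
    ext; simp
  ext x
  have hx := congr(TensorProduct.lid k k ((X.basis.coord j).rTensor k ($X.counit x)))
  simp only [LinearEquiv.coe_coe, rid_symm_apply, rTensor_tmul, lid_tmul, smul_eq_mul,
    mul_one] at hx
  exact congr($hnat (X.ρ x)).trans hx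

theorem isRegularComodHom_coeffMap (X : FdComod k C) (j) :
    X.IsRegularComodHom (X.coeffMap j) := by
  ext x
  simp [ρ_eq_sum X x, comul_coeffMap]

theorem canI_apply (X : FdComod k C) (S : X.carrier →ₗ[k] X.carrier) :
    canI k C X S = ∑ j, X.coeffMap j (S (X.basis j)) := by
  simp only [canI, LinearMap.sum_apply]
  rfl

theorem IsRegularComodHom.apply_eq_sum {X : FdComod k C} {g : X.carrier →ₗ[k] C}
    (hg : X.IsRegularComodHom g) (x : X.carrier) :
    g x = ∑ j, Coalgebra.counit (R := k) (g (X.basis j)) • X.coeffMap j x := by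
  have h := congr(TensorProduct.lid k C (Coalgebra.counit.rTensor C ($hg x)))
  simp only [comp_apply, ρ_eq_sum X x, map_sum, rTensor_tmul, lid_tmul,
    rTensor_counit_comul] at h
  simpa using h.symm

theorem IsRegularComodHom.canI_smulRight {X : FdComod k C} {g : X.carrier →ₗ[k] C}
    (hg : X.IsRegularComodHom g) (x : X.carrier) :
    canI k C X ((Coalgebra.counit ∘ₗ g).smulRight x) = g x := by
  simp [canI_apply, hg.apply_eq_sum x]

def coeffSpace (X : FdComod k C) : Submodule k C :=
  ⨆ j, range (X.coeffMap j)

instance (X : FdComod k C) : FiniteDimensional k X.coeffSpace := by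
  unfold coeffSpace
  infer_instance

theorem coeffMap_mem_coeffSpace (X : FdComod k C) (j) (x : X.carrier) :
    X.coeffMap j x ∈ X.coeffSpace :=
  Submodule.mem_iSup_of_mem j ⟨x, rfl⟩

theorem IsRegularComodHom.apply_mem_coeffSpace {X : FdComod k C} {g : X.carrier →ₗ[k] C}
    (hg : X.IsRegularComodHom g) (x : X.carrier) : g x ∈ X.coeffSpace := by
  rw [hg.apply_eq_sum x]
  exact Submodule.sum_mem _ fun j _ => Submodule.smul_mem _ _ (X.coeffMap_mem_coeffSpace j x)

theorem isSubcoalgebra_coeffSpace (X : FdComod k C) : IsSubcoalgebra k C X.coeffSpace := by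
  have hle : X.coeffSpace ≤
      (range (map X.coeffSpace.subtype X.coeffSpace.subtype)).comap comul := by
    refine iSup_le fun j => ?_
    rintro _ ⟨x, rfl⟩
    rw [Submodule.mem_comap, comul_coeffMap]
    exact Submodule.sum_mem _ fun i _ => ⟨⟨_, X.coeffMap_mem_coeffSpace j _⟩ ⊗ₜ
      ⟨_, X.coeffMap_mem_coeffSpace i x⟩, rfl⟩
  exact fun c hc => hle hc

end FdComod

theorem IsSubcoalgebra.sup {D₁ D₂ : Submodule k C} (h₁ : IsSubcoalgebra k C D₁)
    (h₂ : IsSubcoalgebra k C D₂) : IsSubcoalgebra k C (D₁ ⊔ D₂) := by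
  have mono : ∀ {D D' : Submodule k C} (h : D ≤ D'),
      range (map D.subtype D.subtype) ≤ range (map D'.subtype D'.subtype) := fun h => by
    rw [← Submodule.subtype_comp_inclusion _ _ h, map_comp]
    exact range_comp_le_range _ _
  intro c hc
  obtain ⟨a, ha, b, hb, rfl⟩ := Submodule.mem_sup.mp hc
  rw [map_add]
  exact add_mem (mono le_sup_left (h₁ a ha)) (mono le_sup_right (h₂ b hb))

theorem IsSubcoalgebra.isRightCoideal {D : Submodule k C} (hD : IsSubcoalgebra k C D) :
    IsRightCoideal k C D := fun c hc => by
  obtain ⟨t, ht⟩ := hD c hc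
  exact ⟨D.subtype.lTensor D t, by rw [← comp_apply, rTensor_comp_lTensor, ← ht]⟩

namespace IsRightCoideal

variable {D : Submodule k C} (hD : IsRightCoideal k C D)

/-- The corestriction of `Δ` to `D → D ⊗ C`. -/
def coaction : D →ₗ[k] D ⊗[k] C :=
  (LinearEquiv.ofInjective _ (D.rTensor_subtype_injective C)).symm.toLinearMap ∘ₗ
    codRestrict _ (comul ∘ₗ D.subtype) fun d => hD d d.2

theorem rTensor_subtype_coaction (d : D) :
    D.subtype.rTensor C (hD.coaction d) = comul (R := k) (d : C) :=
  congr(Subtype.val $((LinearEquiv.ofInjective _ (D.rTensor_subtype_injective C)).apply_symm_apply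
    ⟨comul (R := k) (d : C), hD d d.2⟩))

theorem rTensor_subtype_lTensor_coaction {W : Type} [AddCommGroup W] [Module k W]
    (f : C →ₗ[k] W) (d : D) :
    D.subtype.rTensor W (f.lTensor D (hD.coaction d)) = f.lTensor C (comul (R := k) (d : C)) := by
  rw [← comp_apply, rTensor_comp_lTensor, ← lTensor_comp_rTensor, comp_apply,
    hD.rTensor_subtype_coaction]

abbrev toFdComod [FiniteDimensional k D] : FdComod k C where
  carrier := D
  ρ := hD.coaction
  coassoc := by
    ext d
    apply D.rTensor_subtype_injective (C ⊗[k] C)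
    have hρ : D.subtype.rTensor C ∘ₗ hD.coaction = comul ∘ₗ D.subtype :=
      LinearMap.ext hD.rTensor_subtype_coaction
    have hL : D.subtype.rTensor (C ⊗[k] C)
        (TensorProduct.assoc k D C C (hD.coaction.rTensor C (hD.coaction d))) =
        TensorProduct.assoc k C C C (comul.rTensor C (comul (R := k) (d : C))) := by
      simp only [rTensor_tensor, comp_apply, LinearEquiv.coe_coe, LinearEquiv.symm_apply_apply]
      rw [← rTensor_comp_apply, hρ, rTensor_comp_apply, hD.rTensor_subtype_coaction]
    change D.subtype.rTensor (C ⊗[k] C)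
        (TensorProduct.assoc k D C C (hD.coaction.rTensor C (hD.coaction d))) =
      D.subtype.rTensor (C ⊗[k] C) (comul.lTensor D (hD.coaction d))
    rw [hL, rTensor_subtype_lTensor_coaction]
    exact coassoc_apply _
  counit := by
    ext d
    apply D.rTensor_subtype_injective k
    change D.subtype.rTensor k (Coalgebra.counit.lTensor D (hD.coaction d)) =
      D.subtype.rTensor k (d ⊗ₜ 1)
    rw [rTensor_subtype_lTensor_coaction, lTensor_counit_comul, rTensor_tmul]
    rfl

theorem isComodHom_codRestrict [FiniteDimensional k D] {X : FdComod k C} {g : X.carrier →ₗ[k] C}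
    (hg : X.IsRegularComodHom g) (hgD : ∀ x, g x ∈ D) :
    IsComodHom k C X hD.toFdComod (codRestrict D g hgD) := by
  ext x
  apply D.rTensor_subtype_injective C
  change D.subtype.rTensor C (hD.coaction _) =
    D.subtype.rTensor C ((codRestrict D g hgD).rTensor C _)
  rw [rTensor_subtype_coaction, ← rTensor_comp_apply, subtype_comp_codRestrict]
  exact congr($hg x).symm

variable {U : Type} [AddCommGroup U] [Module k U]

/-- `d ↦ i_D(ε ⊗ d)` on the comodule `D`. -/
def dinatCounit [FiniteDimensional k D]
    (iU : ∀ X : FdComod k C, (X.carrier →ₗ[k] X.carrier) →ₗ[k] U) : D →ₗ[k] U :=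
  iU hD.toFdComod ∘ₗ smulRightₗ (Coalgebra.counit ∘ₗ D.subtype)

theorem dinatCounit_apply_of_comodHom [FiniteDimensional k D]
    {iU : ∀ X : FdComod k C, (X.carrier →ₗ[k] X.carrier) →ₗ[k] U}
    (hdin : DinatComod k C U iU) {X : FdComod k C} {g : X.carrier →ₗ[k] C}
    (hg : X.IsRegularComodHom g) (hgD : ∀ x, g x ∈ D) (x : X.carrier) :
    hD.dinatCounit iU ⟨g x, hgD x⟩ = iU X ((Coalgebra.counit ∘ₗ g).smulRight x) := by
  have h := hdin hD.toFdComod X _ (hD.isComodHom_codRestrict hg hgD)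
    ((Coalgebra.counit ∘ₗ D.subtype).smulRight x)
  rwa [comp_smulRight, smulRight_comp, comp_assoc, subtype_comp_codRestrict] at h

end IsRightCoideal

theorem isLinearMap_of_eq_dinatCounit {U : Type} [AddCommGroup U] [Module k U]
    (iU : ∀ X : FdComod k C, (X.carrier →ₗ[k] X.carrier) →ₗ[k] U) (φ : C → U)
    (hφ : ∀ (D : Submodule k C) (hD : IsSubcoalgebra k C D) [FiniteDimensional k D] (d : D),
      φ d = hD.isRightCoideal.dinatCounit iU d)
    (hloc : ∀ c : C, ∃ D, IsSubcoalgebra k C D ∧ FiniteDimensional k D ∧ c ∈ D) :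
    IsLinearMap k φ where
  map_add c₁ c₂ := by
    obtain ⟨D₁, h₁, _, hc₁⟩ := hloc c₁
    obtain ⟨D₂, h₂, _, hc₂⟩ := hloc c₂
    let d₁ : ↥(D₁ ⊔ D₂) := ⟨c₁, Submodule.mem_sup_left hc₁⟩
    let d₂ : ↥(D₁ ⊔ D₂) := ⟨c₂, Submodule.mem_sup_right hc₂⟩
    have hD := h₁.sup h₂
    calc φ (c₁ + c₂) = _ := hφ _ hD (d₁ + d₂)
      _ = _ := map_add _ d₁ d₂
      _ = φ c₁ + φ c₂ := by rw [← hφ _ hD d₁, ← hφ _ hD d₂]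
  map_smul a c := by
    obtain ⟨D, hD, _, hc⟩ := hloc c
    calc φ (a • c) = _ := hφ _ hD (a • ⟨c, hc⟩)
      _ = _ := map_smul _ a _
      _ = a • φ c := by rw [← hφ _ hD ⟨c, hc⟩]

theorem FdComod.comp_canI_eq {U : Type} [AddCommGroup U] [Module k U] (X : FdComod k C)
    (ψ : C →ₗ[k] U) (T : (X.carrier →ₗ[k] X.carrier) →ₗ[k] U)
    (h : ∀ j x, ψ (X.coeffMap j x) = T ((X.basis.coord j).smulRight x)) :
    ψ ∘ₗ canI k C X = T := by
  ext S
  rw [comp_apply, FdComod.canI_apply, map_sum]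
  simp_rw [h, ← map_sum, X.basis.sum_coord_smulRight]

end

theorem unique_map_from_coalgebra_to_dinatural
    -- for each c : C, the smallest subcoalgebra N_c containing c, given as a
    -- finite-dimensional right C-comodule `Nc c` embedded into C by `ι c`,
    -- with coaction corresponding to Δ:
    (Nc : C → FdComod k C) (ι : ∀ c : C, (Nc c).carrier →ₗ[k] C)
    (hι : ∀ c, (TensorProduct.map (ι c) LinearMap.id) ∘ₗ (Nc c).ρ
            = Coalgebra.comul ∘ₗ ι c)
    (cbar : ∀ c : C, (Nc c).carrier) (hcbar : ∀ c, ι c (cbar c) = c)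
    (hmin : ∀ (c : C) (D : Submodule k C), IsSubcoalgebra k C D → c ∈ D →
              LinearMap.range (ι c) ≤ D)
    -- a vector space with a dinatural family:
    (U : Type) [AddCommGroup U] [Module k U]
    (iU : ∀ X : FdComod k C, (X.carrier →ₗ[k] X.carrier) →ₗ[k] U)
    (hdin : DinatComod k C U iU) :
    (∃! φ : C →ₗ[k] U, ∀ X : FdComod k C, φ ∘ₗ canI k C X = iU X) ∧
    (∀ φ : C →ₗ[k] U, (∀ X : FdComod k C, φ ∘ₗ canI k C X = iU X) →
      ∀ c : C, φ c = iU (Nc c) ((Coalgebra.counit ∘ₗ ι c).smulRight (cbar c))) := by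
  set φ : C → U := fun c => iU (Nc c) ((Coalgebra.counit ∘ₗ ι c).smulRight (cbar c))
  have hιreg : ∀ c, (Nc c).IsRegularComodHom (ι c) := hι
  have hφ : ∀ (D : Submodule k C) (hD : IsSubcoalgebra k C D) [FiniteDimensional k D] (d : D),
      φ d = hD.isRightCoideal.dinatCounit iU d := fun D hD _ d => by
    have hιD : ∀ y, ι d y ∈ D := fun y => hmin d D hD d.2 ⟨y, rfl⟩
    calc φ d = _ := (hD.isRightCoideal.dinatCounit_apply_of_comodHom hdin (hιreg d) hιD _).symm
      _ = _ := congr(hD.isRightCoideal.dinatCounit iU $(Subtype.ext (hcbar d)))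
  have hlin : IsLinearMap k φ := isLinearMap_of_eq_dinatCounit iU φ hφ fun c =>
    ⟨_, (Nc c).isSubcoalgebra_coeffSpace, inferInstance,
      by simpa only [hcbar] using (hιreg c).apply_mem_coeffSpace (cbar c)⟩
  have hφ_comod : ∀ (X : FdComod k C) (g : X.carrier →ₗ[k] C), X.IsRegularComodHom g →
      ∀ x, φ (g x) = iU X ((Coalgebra.counit ∘ₗ g).smulRight x) := fun X g hg x => by
    rw [← X.isSubcoalgebra_coeffSpace.isRightCoideal.dinatCounit_apply_of_comodHom hdin hg
      hg.apply_mem_coeffSpace]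
    exact hφ _ X.isSubcoalgebra_coeffSpace ⟨g x, _⟩
  have hcan : ∀ X, hlin.mk' φ ∘ₗ canI k C X = iU X := fun X =>
    X.comp_canI_eq _ _ fun j x => by
      rw [IsLinearMap.mk'_apply, hφ_comod X _ (X.isRegularComodHom_coeffMap j),
        X.counit_comp_coeffMap]
  have huniq : ∀ ψ : C →ₗ[k] U, (∀ X, ψ ∘ₗ canI k C X = iU X) → ∀ c, ψ c = φ c :=
    fun ψ hψ c => calc
      ψ c = ψ (canI k C (Nc c) ((Coalgebra.counit ∘ₗ ι c).smulRight (cbar c))) := by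
        rw [(hιreg c).canI_smulRight, hcbar]
      _ = φ c := congr($(hψ (Nc c)) _)
  exact ⟨⟨hlin.mk' φ, hcan, fun ψ hψ => LinearMap.ext (huniq ψ hψ)⟩, huniq⟩
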